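/- arXiv:2406.02119 — 4 statements merged into one kernel-verified Lean document; each statement's English description precedes it below -/
import Mathlib

section
/- Let L ≥ 1, let μ_1, ..., μ_L be pairwise distinct real numbers and t_1, ..., t_L be pairwise distinct real numbers. Then the L × L real matrix V with entries V(i, j) = exp(−μ_i · t_j) is invertible, i.e., det V ≠ 0. -/
set_option autoImplicit false

/-!
If the determinant vanished, some nonzero combination of the rows would vanish, i.e. a nonzero
exponential sum `∑ cᵢ exp (-μᵢ x)` with `L` distinct exponents would have the `L` distinct zeros
`t_j`. Such a sum has fewer zeros than exponents: multiplying by `exp (μ₀ x)` and differentiating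
kills one exponent, while Rolle's theorem loses at most one zero.
-/

open Real Finset

/-- If `f'` has infinitely many zeros there is nothing to prove; otherwise apply Rolle between
consecutive zeros of `f`. -/
theorem exists_finset_hasDerivAt_eq_zero {f f' : ℝ → ℝ} (hf : ∀ x, HasDerivAt f (f' x) x)
    (s : Finset ℝ) (hs : ∀ x ∈ s, f x = 0) :
    ∃ t : Finset ℝ, (∀ x ∈ t, f' x = 0) ∧ #s ≤ #t + 1 := by
  by_cases hfin : {x | f' x = 0}.Finite
  · refine ⟨hfin.toFinset, by simp, card_le_of_interleaved fun x hx y hy hxy _ => ?_⟩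
    obtain ⟨z, hz, hz0⟩ := exists_hasDerivAt_eq_zero hxy
      (fun z _ => (hf z).continuousAt.continuousWithinAt) (by rw [hs x hx, hs y hy])
      (fun z _ => hf z)
    exact ⟨z, by simpa using hz0, hz⟩
  · obtain ⟨t, hts, hcard⟩ := (Set.not_finite.mp hfin).exists_subset_card_eq #s
    exact ⟨t, fun x hx => hts hx, by omega⟩

theorem hasDerivAt_sum_mul_exp_mul {ι : Type*} [Fintype ι] (c ν : ι → ℝ) (x : ℝ) :
    HasDerivAt (fun x => ∑ i, c i * exp (ν i * x)) (∑ i, c i * ν i * exp (ν i * x)) x := by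
  refine HasDerivAt.fun_sum fun i _ => ?_
  exact (((hasDerivAt_id x).const_mul (ν i)).exp.const_mul (c i)).congr_deriv
    (by rw [id, mul_one]; ring)

theorem eq_zero_of_sum_mul_exp_mul_eq_zero {n : ℕ} {c ν : Fin n → ℝ} (hν : Function.Injective ν)
    {s : Finset ℝ} (hs : n ≤ #s) (hzero : ∀ x ∈ s, ∑ i, c i * exp (ν i * x) = 0) : c = 0 := by
  induction n generalizing s with
  | zero => exact Subsingleton.elim _ _
  | succ n ih =>
    set κ : Fin (n + 1) → ℝ := fun i => ν i - ν 0
    have hshift : ∀ x ∈ s, ∑ i, c i * exp (κ i * x) = 0 := fun x hx => by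
      have : ∑ i, c i * exp (κ i * x) = (∑ i, c i * exp (ν i * x)) * exp (-(ν 0 * x)) := by
        rw [sum_mul]
        refine sum_congr rfl fun i _ => ?_
        rw [mul_assoc, ← exp_add, sub_mul, sub_eq_add_neg]
      rw [this, hzero x hx, zero_mul]
    obtain ⟨t, ht, hst⟩ := exists_finset_hasDerivAt_eq_zero
      (hasDerivAt_sum_mul_exp_mul c κ) s hshift
    have htail : (fun i : Fin n => c i.succ * κ i.succ) = 0 := by
      have hκ_inj : Function.Injective fun i : Fin n => κ i.succ :=
        fun i j h => Fin.succ_injective _ (hν (by simpa [κ] using h))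
      refine ih hκ_inj (s := t) (by omega) fun x hx => ?_
      simpa [Fin.sum_univ_succ, κ, mul_assoc] using ht x hx
    have hc_succ : ∀ i : Fin n, c i.succ = 0 := fun i => by
      have hκ : κ i.succ ≠ 0 := sub_ne_zero.mpr (hν.ne (Fin.succ_ne_zero i))
      simpa [hκ] using congrFun htail i
    obtain ⟨x, hx⟩ : s.Nonempty := card_pos.mp (by omega)
    have hc_zero : c 0 = 0 := by
      simpa [Fin.sum_univ_succ, hc_succ, exp_ne_zero] using hzero x hx
    ext i
    cases i using Fin.cases with
    | zero => exact hc_zero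
    | succ i => exact hc_succ i

theorem exp_vandermonde_det_ne_zero_general (L : ℕ) (μ t : Fin L → ℝ)
    (hμ : Function.Injective μ) (ht : Function.Injective t) :
    (Matrix.of fun i j : Fin L => Real.exp (-μ i * t j)).det ≠ 0 := by
  intro hdet
  obtain ⟨v, hv, hv0⟩ := Matrix.exists_vecMul_eq_zero_iff.mpr hdet
  refine hv (eq_zero_of_sum_mul_exp_mul_eq_zero (ν := fun i => -μ i) (neg_injective.comp hμ)
    (s := univ.image t) (by rw [card_image_of_injective _ ht, card_fin]) ?_)
  simp only [mem_image, mem_univ, true_and, forall_exists_index, forall_apply_eq_imp_iff]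
  intro j
  simpa [Matrix.vecMul, dotProduct] using congrFun hv0 j

/-- The exponential Vandermonde matrix `V(i,j) = exp(−μ_i · t_j)` with pairwise distinct
`μ_i` and pairwise distinct `t_j` is invertible, i.e. `det V ≠ 0`. -/
theorem exp_vandermonde_det_ne_zero (L : ℕ) (hL : 1 ≤ L) (μ t : Fin L → ℝ)
    (hμ : Function.Injective μ) (ht : Function.Injective t) :
    (Matrix.of fun i j : Fin L => Real.exp (-μ i * t j)).det ≠ 0 :=
  exp_vandermonde_det_ne_zero_general L μ t hμ ht
end

section
/- Let L ≥ 1, let μ_1, ..., μ_L be pairwise distinct positive real numbers and t_1, ..., t_L be pairwise distinct positive real numbers. Then the L × L real matrix J' with entries J'(i, j) = 1 − exp(−μ_i · t_j) is invertible. -/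
/-!
If `J' v = 0`, then `x ↦ ∑ⱼ vⱼ (1 - exp (-x tⱼ))` is an exponential sum with the `L + 1`
distinct exponents `0, -t₁, …, -t_L` vanishing at the `L + 1` distinct points `0, μ₁, …, μ_L`.
Such a sum has all coefficients zero: multiplying by `exp (-c x)` kills one exponent without
moving the zeros, and Rolle's theorem then gives one zero fewer for the derivative, a sum with
one term fewer.
-/

open Finset Real

theorem exists_finset_card_le_succ_of_hasDerivAt_eq_zero {f f' : ℝ → ℝ}
    (hf : ∀ x, HasDerivAt f (f' x) x) {S : Finset ℝ} (hS : ∀ x ∈ S, f x = 0) :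
    ∃ T : Finset ℝ, S.card ≤ T.card + 1 ∧ ∀ x ∈ T, f' x = 0 := by
  by_cases hfin : {x | f' x = 0}.Finite
  · refine ⟨hfin.toFinset, card_le_of_interleaved fun x hx y hy hxy _ => ?_, by simp⟩
    obtain ⟨z, hz, hz0⟩ := exists_hasDerivAt_eq_zero hxy
      (fun x _ => (hf x).continuousAt.continuousWithinAt) ((hS x hx).trans (hS y hy).symm)
      fun x _ => hf x
    exact ⟨z, by simpa using hz0, hz⟩
  · obtain ⟨T, hT, hTcard⟩ := Set.Infinite.exists_subset_card_eq hfin S.card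
    exact ⟨T, by omega, fun x hx => hT hx⟩

theorem hasDerivAt_sum_mul_exp {ι : Type*} (s : Finset ι) (a c : ι → ℝ) (x : ℝ) :
    HasDerivAt (fun y => ∑ k ∈ s, a k * exp (c k * y))
      (∑ k ∈ s, a k * c k * exp (c k * x)) x := by
  refine HasDerivAt.fun_sum fun k _ => ?_
  have := (((hasDerivAt_id x).const_mul (c k)).exp).const_mul (a k)
  simp only [id, mul_one] at this
  exact this.congr_deriv (by ring)

theorem eq_zero_of_sum_mul_exp_eq_zero {ι : Type*} (s : Finset ι) {a c : ι → ℝ}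
    (hc : Set.InjOn c s) {S : Finset ℝ} (hS : s.card ≤ S.card)
    (hzero : ∀ x ∈ S, ∑ k ∈ s, a k * exp (c k * x) = 0) : ∀ k ∈ s, a k = 0 := by
  classical
  induction s using Finset.induction_on generalizing a c S with
  | empty => simp
  | insert j s hj ih =>
    have hshift : ∀ x ∈ S, ∑ k ∈ insert j s, a k * exp ((c k - c j) * x) = 0 := by
      intro x hx
      have : ∑ k ∈ insert j s, a k * exp ((c k - c j) * x) =
          exp (-c j * x) * ∑ k ∈ insert j s, a k * exp (c k * x) := by
        rw [mul_sum]
        refine sum_congr rfl fun k _ => ?_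
        rw [show (c k - c j) * x = -c j * x + c k * x by ring, exp_add]
        ring
      rw [this, hzero x hx, mul_zero]
    have hderiv : ∀ x, HasDerivAt (fun y => ∑ k ∈ insert j s, a k * exp ((c k - c j) * y))
        (∑ k ∈ s, (a k * (c k - c j)) * exp ((c k - c j) * x)) x := by
      intro x
      simpa [sum_insert hj] using hasDerivAt_sum_mul_exp (insert j s) a (fun k => c k - c j) x
    obtain ⟨T, hST, hT⟩ := exists_finset_card_le_succ_of_hasDerivAt_eq_zero hderiv hshift
    have hcj : ∀ k ∈ s, c k ≠ c j := fun k hk hkj =>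
      hj (hc (mem_insert_of_mem hk) (mem_insert_self j s) hkj ▸ hk)
    have hs : ∀ k ∈ s, a k = 0 := by
      have hcard : s.card ≤ T.card := by rw [card_insert_of_notMem hj] at hS; omega
      have hinj : Set.InjOn (fun k => c k - c j) s := fun k hk l hl hkl =>
        hc (mem_insert_of_mem hk) (mem_insert_of_mem hl) (sub_left_inj.mp hkl)
      intro k hk
      have := ih hinj hcard hT k hk
      exact (mul_eq_zero.mp this).resolve_right (sub_ne_zero.mpr (hcj k hk))
    obtain ⟨x, hx⟩ : S.Nonempty := card_pos.mp (by rw [card_insert_of_notMem hj] at hS; omega)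
    have hj0 : a j * exp (c j * x) = 0 := by
      have := hzero x hx
      rwa [sum_insert hj, sum_eq_zero fun k hk => by rw [hs k hk, zero_mul], add_zero] at this
    exact (forall_mem_insert _ _ _).mpr ⟨(mul_eq_zero.mp hj0).resolve_right (exp_ne_zero _), hs⟩

theorem eq_zero_of_sum_one_sub_exp_mul_eq_zero {ι : Type*} [Fintype ι] {t : ι → ℝ}
    (ht : Function.Injective t) (ht0 : ∀ j, t j ≠ 0) {v : ι → ℝ} {S : Finset ℝ}
    (hS : Fintype.card ι < S.card) (hzero : ∀ x ∈ S, ∑ j, (1 - exp (-x * t j)) * v j = 0) :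
    v = 0 := by
  let c : Option ι → ℝ := fun k => k.elim 0 fun j => -t j
  let a : Option ι → ℝ := fun k => k.elim (∑ j, v j) fun j => -v j
  have hc : Function.Injective c := by
    rintro (_ | i) (_ | j) hij
    · rfl
    · exact absurd (neg_eq_zero.mp hij.symm) (ht0 j)
    · exact absurd (neg_eq_zero.mp hij) (ht0 i)
    · exact congrArg some (ht (neg_inj.mp hij))
  have hsum : ∀ x, ∑ k, a k * exp (c k * x) = ∑ j, (1 - exp (-x * t j)) * v j := by
    intro x
    simp only [Fintype.sum_option, a, c, Option.elim, zero_mul, exp_zero, mul_one,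
      ← sum_add_distrib]
    refine sum_congr rfl fun j _ => ?_
    ring_nf
  have hcoeff := eq_zero_of_sum_mul_exp_eq_zero univ hc.injOn
    (by simpa [Fintype.card_option] using hS) fun x hx => (hsum x).trans (hzero x hx)
  funext j
  simpa [a] using hcoeff (some j) (mem_univ _)

theorem one_sub_exp_matrix_isUnit_general (L : ℕ) (μ t : Fin L → ℝ)
    (hμ : Function.Injective μ) (ht : Function.Injective t)
    (hμpos : ∀ i, 0 < μ i) (htpos : ∀ j, 0 < t j) :
    IsUnit (Matrix.of fun i j : Fin L => 1 - Real.exp (-μ i * t j)) := by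
  rw [← Matrix.mulVec_injective_iff_isUnit, ← Matrix.coe_mulVecLin, ← LinearMap.ker_eq_bot,
    Matrix.ker_mulVecLin_eq_bot_iff]
  intro v hv
  have h0 : (0 : ℝ) ∉ univ.image μ := by
    simpa using fun i => (hμpos i).ne'
  refine eq_zero_of_sum_one_sub_exp_mul_eq_zero (S := insert 0 (univ.image μ)) ht
    (fun j => (htpos j).ne') (by simp [card_insert_of_notMem h0, card_image_of_injective _ hμ]) ?_
  simp only [mem_insert, mem_image, mem_univ, true_and]
  rintro x (rfl | ⟨i, rfl⟩)
  · simp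
  · simpa [Matrix.mulVec, dotProduct] using congrFun hv i

/-- The matrix `J'(i,j) = 1 − exp(−μ_i · t_j)` with pairwise distinct positive `μ_i`
and pairwise distinct positive `t_j` is invertible. -/
theorem one_sub_exp_matrix_isUnit (L : ℕ) (hL : 1 ≤ L) (μ t : Fin L → ℝ)
    (hμ : Function.Injective μ) (ht : Function.Injective t)
    (hμpos : ∀ i, 0 < μ i) (htpos : ∀ j, 0 < t j) :
    IsUnit (Matrix.of fun i j : Fin L => 1 - Real.exp (-μ i * t j)) :=
  one_sub_exp_matrix_isUnit_general L μ t hμ ht hμpos htpos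
end

section
/- Let N ≥ L ≥ 1, let Φ be a real N × L matrix with orthonormal columns (Φᵀ Φ = I_L), let F and D be invertible diagonal L × L matrices, and let J be an invertible L × L real matrix. Set A = Φ F J and Ã = Φ D F J, with columns y_1, ..., y_L and ỹ_1, ..., ỹ_L respectively (viewed as vectors in Euclidean space ℝ^N). Let V be a linear subspace of ℝ^N and let P denote the orthogonal projection onto V. Then (Σ_{j=1}^{L} ‖y_j − P y_j‖²) · (Σ_{j=1}^{L} ‖ỹ_j‖²) ≤ ‖J⁻¹ D⁻¹ J‖_F² · (max_{1 ≤ i ≤ L} |D(i,i)|)² · (Σ_{j=1}^{L} ‖ỹ_j − P ỹ_j‖²) · (Σ_{j=1}^{L} ‖y_j‖²). -/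
/-! With `M = J⁻¹ D⁻¹ J` one has `A = Ã M`, so each residual `y_j - P y_j` is the combination
`Σ_k M_kj (ỹ_k - P ỹ_k)`, and Cauchy–Schwarz bounds `Σ_j ‖y_j - P y_j‖²` by
`‖M‖_F² Σ_k ‖ỹ_k - P ỹ_k‖²`. Since `Φ` is an isometry, `Σ_j ‖ỹ_j‖² = ‖D F J‖_F²`, which is at most
`(max_i |D(i,i)|)² ‖F J‖_F² = (max_i |D(i,i)|)² Σ_j ‖y_j‖²`. Multiplying the two bounds gives the
claim. -/

set_option autoImplicit false

open Matrix

theorem mul_diagonal_mul_diagonal_mul_conj_inv {m n K : Type*} [Fintype n] [DecidableEq n]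
    [Field K] (B : Matrix m n K) (d f : n → K) (hd : ∀ i, d i ≠ 0) (J : Matrix n n K)
    (hJ : IsUnit J) :
    B * diagonal d * diagonal f * J * (J⁻¹ * (diagonal d)⁻¹ * J) = B * diagonal f * J := by
  have hJdet : IsUnit J.det := (isUnit_iff_isUnit_det J).mp hJ
  have hDdet : IsUnit (diagonal d).det := by
    rw [det_diagonal]
    exact (Finset.prod_ne_zero_iff.mpr fun i _ => hd i).isUnit
  have hcomm : diagonal d * diagonal f = diagonal f * diagonal d := by
    rw [diagonal_mul_diagonal, diagonal_mul_diagonal, funext fun i => mul_comm (d i) (f i)]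
  simp only [Matrix.mul_assoc, mul_nonsing_inv_cancel_left _ _ hJdet]
  rw [← Matrix.mul_assoc (diagonal d), hcomm, Matrix.mul_assoc,
    mul_nonsing_inv_cancel_left _ _ hDdet]

theorem eq_sum_smul_of_cols_mul {𝕜 m n p : Type*} [RCLike 𝕜] [Fintype n]
    (B : Matrix m n 𝕜) (M : Matrix n p 𝕜) (u : n → EuclideanSpace 𝕜 m)
    (v : p → EuclideanSpace 𝕜 m) (hu : ∀ k i, u k i = B i k) (hv : ∀ j i, v j i = (B * M) i j)
    (j : p) : v j = ∑ k, M k j • u k := by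
  ext i
  simp [hv, hu, mul_apply, mul_comm]

theorem sum_norm_sq_sum_smul_le {ι κ E : Type*} [Fintype ι] [Fintype κ]
    [SeminormedAddCommGroup E] [NormedSpace ℝ E] (M : Matrix κ ι ℝ) (u : κ → E) :
    ∑ j, ‖∑ k, M k j • u k‖ ^ 2 ≤ (∑ k, ∑ j, M k j ^ 2) * ∑ k, ‖u k‖ ^ 2 := by
  have hcol : ∀ j, ‖∑ k, M k j • u k‖ ^ 2 ≤ (∑ k, M k j ^ 2) * ∑ k, ‖u k‖ ^ 2 := fun j =>
    calc ‖∑ k, M k j • u k‖ ^ 2 ≤ (∑ k, |M k j| * ‖u k‖) ^ 2 := by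
          gcongr
          refine (norm_sum_le _ _).trans_eq ?_
          simp only [norm_smul, Real.norm_eq_abs]
      _ ≤ (∑ k, |M k j| ^ 2) * ∑ k, ‖u k‖ ^ 2 := Finset.sum_mul_sq_le_sq_mul_sq _ _ _
      _ = (∑ k, M k j ^ 2) * ∑ k, ‖u k‖ ^ 2 := by simp only [sq_abs]
  calc ∑ j, ‖∑ k, M k j • u k‖ ^ 2 ≤ ∑ j, (∑ k, M k j ^ 2) * ∑ k, ‖u k‖ ^ 2 :=
        Finset.sum_le_sum fun j _ => hcol j
    _ = (∑ k, ∑ j, M k j ^ 2) * ∑ k, ‖u k‖ ^ 2 := by rw [← Finset.sum_mul, Finset.sum_comm]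

theorem sum_norm_sq_eq_sum_sq_of_cols {m n : Type*} [Fintype m] [Fintype n]
    (A : Matrix m n ℝ) (v : n → EuclideanSpace ℝ m) (hv : ∀ j i, v j i = A i j) :
    ∑ j, ‖v j‖ ^ 2 = ∑ j, ∑ i, A i j ^ 2 := by
  simp [EuclideanSpace.norm_sq_eq, hv]

theorem Matrix.sum_sq_mul_apply_of_transpose_mul_self {m n p R : Type*} [Fintype m] [Fintype n]
    [DecidableEq n] [CommRing R] {Φ : Matrix m n R} (hΦ : Φᵀ * Φ = 1) (X : Matrix n p R)
    (j : p) : ∑ i, (Φ * X) i j ^ 2 = ∑ i, X i j ^ 2 := by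
  have h : (Φ * X)ᵀ * (Φ * X) = Xᵀ * X := by
    rw [transpose_mul, Matrix.mul_assoc, ← Matrix.mul_assoc Φᵀ, hΦ, Matrix.one_mul]
  simpa [mul_apply, sq, mul_comm] using congrFun (congrFun h j) j

theorem Matrix.sum_sq_diagonal_mul_le {n p : Type*} [Fintype n] [DecidableEq n] [Fintype p]
    (d : n → ℝ) (X : Matrix n p ℝ) :
    ∑ j, ∑ i, (diagonal d * X) i j ^ 2 ≤ (⨆ i, |d i|) ^ 2 * ∑ j, ∑ i, X i j ^ 2 := by
  simp only [diagonal_mul, Finset.mul_sum, mul_pow]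
  refine Finset.sum_le_sum fun j _ => Finset.sum_le_sum fun i _ => ?_
  refine mul_le_mul_of_nonneg_right ?_ (sq_nonneg _)
  have hi : |d i| ≤ ⨆ i, |d i| := le_ciSup (Finite.bddAbove_range fun i => |d i|) i
  rw [← sq_abs (d i)]
  exact pow_le_pow_left₀ (abs_nonneg _) hi 2

theorem pod_projection_transfer_general (N L : ℕ)
    (Φ : Matrix (Fin N) (Fin L) ℝ) (hΦ : Φᵀ * Φ = 1)
    (f d : Fin L → ℝ) (hd : ∀ i, d i ≠ 0)
    (J : Matrix (Fin L) (Fin L) ℝ) (hJ : IsUnit J)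
    (A Atil : Matrix (Fin N) (Fin L) ℝ)
    (hA : A = Φ * Matrix.diagonal f * J)
    (hAtil : Atil = Φ * Matrix.diagonal d * Matrix.diagonal f * J)
    (y ytil : Fin L → EuclideanSpace ℝ (Fin N))
    (hy : ∀ j i, y j i = A i j) (hytil : ∀ j i, ytil j i = Atil i j)
    (V : Submodule ℝ (EuclideanSpace ℝ (Fin N))) :
    (∑ j, ‖y j - (V.orthogonalProjectionOnto (y j) : EuclideanSpace ℝ (Fin N))‖ ^ 2) *
        (∑ j, ‖ytil j‖ ^ 2) ≤
      (∑ i, ∑ j, ((J⁻¹ * (Matrix.diagonal d)⁻¹ * J) i j) ^ 2) *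
        (⨆ i : Fin L, |d i|) ^ 2 *
        (∑ j, ‖ytil j - (V.orthogonalProjectionOnto (ytil j) : EuclideanSpace ℝ (Fin N))‖ ^ 2) *
        (∑ j, ‖y j‖ ^ 2) := by
  set M := J⁻¹ * (diagonal d)⁻¹ * J
  have hAM : A = Atil * M := by
    rw [hA, hAtil, mul_diagonal_mul_diagonal_mul_conj_inv _ _ _ hd _ hJ]
  have hyM : ∀ j, y j = ∑ k, M k j • ytil k :=
    eq_sum_smul_of_cols_mul Atil M ytil y hytil (hAM ▸ hy)
  have hresidual : ∑ j, ‖y j - (V.orthogonalProjectionOnto (y j) : EuclideanSpace ℝ (Fin N))‖ ^ 2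
      ≤ (∑ i, ∑ j, M i j ^ 2) *
        ∑ j, ‖ytil j - (V.orthogonalProjectionOnto (ytil j) : EuclideanSpace ℝ (Fin N))‖ ^ 2 := by
    -- the residual `x - P x` is the projection onto `Vᗮ`, a linear map
    simp only [Submodule.coe_orthogonalProjectionOnto_apply,
      ← Submodule.starProjection_orthogonal_val]
    simp only [hyM, map_sum, map_smul]
    exact sum_norm_sq_sum_smul_le M _
  have hscale : ∑ j, ‖ytil j‖ ^ 2 ≤ (⨆ i, |d i|) ^ 2 * ∑ j, ‖y j‖ ^ 2 := by
    rw [sum_norm_sq_eq_sum_sq_of_cols Atil ytil hytil, sum_norm_sq_eq_sum_sq_of_cols A y hy,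
      hAtil, hA]
    simp only [Matrix.mul_assoc, sum_sq_mul_apply_of_transpose_mul_self hΦ]
    exact sum_sq_diagonal_mul_le d _
  calc _ ≤ ((∑ i, ∑ j, M i j ^ 2) *
          ∑ j, ‖ytil j - (V.orthogonalProjectionOnto (ytil j) : EuclideanSpace ℝ (Fin N))‖ ^ 2) *
        ((⨆ i, |d i|) ^ 2 * ∑ j, ‖y j‖ ^ 2) :=
        mul_le_mul hresidual hscale (by positivity) (by positivity)
    _ = _ := by ring

/-- With `A = Φ F J`, `Ã = Φ D F J` (Φ with orthonormal columns, `F`, `D` invertible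
diagonal, `J` invertible) and `P` the orthogonal projection onto a subspace `V ⊆ ℝ^N`:
`(Σ_j ‖y_j − P y_j‖²)(Σ_j ‖ỹ_j‖²) ≤ ‖J⁻¹D⁻¹J‖_F² (max_i |D(i,i)|)²
  (Σ_j ‖ỹ_j − P ỹ_j‖²)(Σ_j ‖y_j‖²)`. -/
theorem pod_projection_transfer (N L : ℕ) (hL : 1 ≤ L) (hLN : L ≤ N)
    (Φ : Matrix (Fin N) (Fin L) ℝ) (hΦ : Φᵀ * Φ = 1)
    (f d : Fin L → ℝ) (hf : ∀ i, f i ≠ 0) (hd : ∀ i, d i ≠ 0)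
    (J : Matrix (Fin L) (Fin L) ℝ) (hJ : IsUnit J)
    (A Atil : Matrix (Fin N) (Fin L) ℝ)
    (hA : A = Φ * Matrix.diagonal f * J)
    (hAtil : Atil = Φ * Matrix.diagonal d * Matrix.diagonal f * J)
    (y ytil : Fin L → EuclideanSpace ℝ (Fin N))
    (hy : ∀ j i, y j i = A i j) (hytil : ∀ j i, ytil j i = Atil i j)
    (V : Submodule ℝ (EuclideanSpace ℝ (Fin N))) :
    (∑ j, ‖y j - (V.orthogonalProjectionOnto (y j) : EuclideanSpace ℝ (Fin N))‖ ^ 2) *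
        (∑ j, ‖ytil j‖ ^ 2) ≤
      (∑ i, ∑ j, ((J⁻¹ * (Matrix.diagonal d)⁻¹ * J) i j) ^ 2) *
        (⨆ i : Fin L, |d i|) ^ 2 *
        (∑ j, ‖ytil j - (V.orthogonalProjectionOnto (ytil j) : EuclideanSpace ℝ (Fin N))‖ ^ 2) *
        (∑ j, ‖y j‖ ^ 2) :=
  pod_projection_transfer_general N L Φ hΦ f d hd J hJ A Atil hA hAtil y ytil hy hytil V
end

section
/- (Proposition A.1, snapshot POD projection error formula.) Let H be a real inner product space, let y_1, ..., y_n ∈ H, and let K be the n × n Gram matrix with entries K(i, j) = ⟨y_i, y_j⟩. Let v_1, ..., v_n be an orthonormal basis of ℝ^n consisting of eigenvectors of K, with K v_k = λ_k v_k and λ_1 ≥ λ_2 ≥ ... ≥ λ_n ≥ 0. Let 1 ≤ r ≤ n be such that λ_r > 0, and define ψ_k = λ_k^{−1/2} · Σ_{j=1}^{n} (v_k)_j · y_j in H for k = 1, ..., r. Then Σ_{i=1}^{n} ‖y_i − Σ_{k=1}^{r} ⟨y_i, ψ_k⟩ · ψ_k‖² = Σ_{k=r+1}^{n} λ_k. 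-/
set_option autoImplicit false

open scoped RealInnerProductSpace

/-- Proposition A.1 (snapshot POD projection error formula): if `K` is the Gram matrix of
`y_1, ..., y_n`, `v_1, ..., v_n` an orthonormal eigenbasis of `K` with eigenvalues
`λ_1 ≥ ... ≥ λ_n ≥ 0`, `λ_r > 0`, and `ψ_k = λ_k^{-1/2} Σ_j (v_k)_j y_j` for `k ≤ r`,
then `Σ_i ‖y_i − Σ_{k ≤ r} ⟨y_i, ψ_k⟩ ψ_k‖² = Σ_{k > r} λ_k`. -/
theorem pod_projection_error_formula {H : Type*} [NormedAddCommGroup H]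
    [InnerProductSpace ℝ H] (n : ℕ) (y : Fin n → H) (K : Matrix (Fin n) (Fin n) ℝ)
    (hK : ∀ i j, K i j = ⟪y i, y j⟫)
    (v : Fin n → Fin n → ℝ) (lam : Fin n → ℝ)
    (horth : ∀ k l, ∑ j, v k j * v l j = if k = l then (1 : ℝ) else 0)
    (heig : ∀ k, K.mulVec (v k) = lam k • v k)
    (hanti : Antitone lam) (hnonneg : ∀ k, 0 ≤ lam k)
    (r : ℕ) (hr1 : 1 ≤ r) (hrn : r ≤ n) (hlamr : 0 < lam ⟨r - 1, by omega⟩)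
    (ψ : Fin n → H)
    (hψ : ∀ k : Fin n, (k : ℕ) < r → ψ k = (Real.sqrt (lam k))⁻¹ • ∑ j, v k j • y j) :
    ∑ i, ‖y i - ∑ k ∈ Finset.univ.filter (fun k : Fin n => (k : ℕ) < r),
        ⟪y i, ψ k⟫ • ψ k‖ ^ 2 =
      ∑ k ∈ Finset.univ.filter (fun k : Fin n => r ≤ (k : ℕ)), lam k := by
  have hlampos : ∀ k : Fin n, (k : ℕ) < r → 0 < lam k := by
    intro k hk
    exact lt_of_lt_of_le hlamr (hanti (show k ≤ ⟨r - 1, by omega⟩ by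
      rw [Fin.le_def]; simp; omega))
  have hsqpos : ∀ k : Fin n, (k : ℕ) < r → 0 < Real.sqrt (lam k) := by
    intro k hk; exact Real.sqrt_pos.mpr (hlampos k hk)
  -- inner products with the y's against eigenvector combos
  have hmv : ∀ (k : Fin n) (i : Fin n), ∑ j, v k j * ⟪y i, y j⟫ = lam k * v k i := by
    intro k i
    have := congrFun (heig k) i
    simp only [Matrix.mulVec, dotProduct, Pi.smul_apply, smul_eq_mul] at this
    rw [← this]
    exact Finset.sum_congr rfl fun j _ => by rw [hK, mul_comm]
  have h1 : ∀ (i k : Fin n), (k : ℕ) < r → ⟪y i, ψ k⟫ = Real.sqrt (lam k) * v k i := by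
    intro i k hk
    rw [hψ k hk, real_inner_smul_right, inner_sum]
    simp only [real_inner_smul_right]
    rw [hmv k i]
    rw [show lam k * v k i = Real.sqrt (lam k) * (Real.sqrt (lam k) * v k i) by
      rw [← mul_assoc, Real.mul_self_sqrt (hnonneg k)]]
    rw [← mul_assoc, inv_mul_cancel₀ (ne_of_gt (hsqpos k hk)), one_mul]
  -- orthonormality of the ψ's
  have h2 : ∀ (k l : Fin n), (k : ℕ) < r → (l : ℕ) < r →
      ⟪ψ k, ψ l⟫ = if k = l then (1 : ℝ) else 0 := by
    intro k l hk hl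
    rw [hψ k hk, real_inner_smul_left, sum_inner]
    simp only [real_inner_smul_left]
    have : ∀ j : Fin n, v k j * ⟪y j, ψ l⟫ = Real.sqrt (lam l) * (v k j * v l j) := by
      intro j; rw [h1 j l hl]; ring
    rw [Finset.sum_congr rfl fun j _ => this j, ← Finset.mul_sum, horth k l]
    by_cases hkl : k = l
    · subst hkl
      simp [inv_mul_cancel₀ (ne_of_gt (hsqpos k hk))]
    · simp [hkl]
  -- double orthogonality
  have hdouble : ∀ i j : Fin n, ∑ k, v k i * v k j = if i = j then (1 : ℝ) else 0 := by
    have hVVt : (Matrix.of v) * (Matrix.of v).transpose = 1 := by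
      ext k l
      simp only [Matrix.mul_apply, Matrix.transpose_apply, Matrix.of_apply]
      rw [horth k l, Matrix.one_apply]
    have hVtV : (Matrix.of v).transpose * (Matrix.of v) = 1 := mul_eq_one_comm.mp hVVt
    intro i j
    have := congrFun (congrFun hVtV i) j
    simp only [Matrix.mul_apply, Matrix.transpose_apply, Matrix.of_apply,
      Matrix.one_apply] at this
    exact this
  -- spectral decomposition of the diagonal of K
  have hspec : ∀ i : Fin n, K i i = ∑ k, lam k * (v k i * v k i) := by
    intro i
    have h0 : K i i = ∑ m, K i m * ∑ k, v k m * v k i := by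
      simp only [hdouble]
      simp
    rw [h0]
    simp only [Finset.mul_sum]
    rw [Finset.sum_comm]
    refine Finset.sum_congr rfl fun k _ => ?_
    have : ∑ m, K i m * (v k m * v k i) = (∑ m, K i m * v k m) * v k i := by
      rw [Finset.sum_mul]; exact Finset.sum_congr rfl fun m _ => by ring
    rw [this]
    have := congrFun (heig k) i
    simp only [Matrix.mulVec, dotProduct, Pi.smul_apply, smul_eq_mul] at this
    rw [this]; ring
  set S := Finset.univ.filter (fun k : Fin n => (k : ℕ) < r) with hSdef
  have hmemS : ∀ k : Fin n, k ∈ S ↔ (k : ℕ) < r := by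
    intro k; simp [hSdef]
  -- per-index norm formula
  have hterm : ∀ i : Fin n, ‖y i - ∑ k ∈ S, ⟪y i, ψ k⟫ • ψ k‖ ^ 2
      = K i i - ∑ k ∈ S, lam k * (v k i * v k i) := by
    intro i
    have hip : ⟪y i, ∑ k ∈ S, ⟪y i, ψ k⟫ • ψ k⟫ = ∑ k ∈ S, ⟪y i, ψ k⟫ ^ 2 := by
      rw [inner_sum]
      exact Finset.sum_congr rfl fun k _ => by rw [real_inner_smul_right]; ring
    have hnp : ‖∑ k ∈ S, ⟪y i, ψ k⟫ • ψ k‖ ^ 2 = ∑ k ∈ S, ⟪y i, ψ k⟫ ^ 2 := by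
      rw [← real_inner_self_eq_norm_sq, sum_inner]
      refine Finset.sum_congr rfl fun k hk => ?_
      rw [real_inner_smul_left, inner_sum]
      have : ∀ l ∈ S, ⟪ψ k, ⟪y i, ψ l⟫ • ψ l⟫
          = ⟪y i, ψ l⟫ * (if k = l then (1 : ℝ) else 0) := by
        intro l hl
        rw [real_inner_smul_right, h2 k l ((hmemS k).mp hk) ((hmemS l).mp hl)]
      rw [Finset.sum_congr rfl this]
      have h3 : ∑ x ∈ S, (⟪y i, ψ x⟫ * if k = x then (1 : ℝ) else 0)
          = ∑ x ∈ S, (if k = x then ⟪y i, ψ x⟫ else 0) := by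
        refine Finset.sum_congr rfl fun x _ => ?_
        split <;> simp
      rw [h3, Finset.sum_ite_eq S k (fun l => ⟪y i, ψ l⟫)]
      simp only [hk, if_true]
      ring
    rw [norm_sub_sq_real, hip, hnp, ← real_inner_self_eq_norm_sq, ← hK i i]
    have hc : ∀ k ∈ S, ⟪y i, ψ k⟫ ^ 2 = lam k * (v k i * v k i) := by
      intro k hk
      rw [h1 i k ((hmemS k).mp hk)]
      rw [mul_pow, Real.sq_sqrt (hnonneg k)]
      ring
    rw [Finset.sum_congr rfl hc]
    ring
  rw [Finset.sum_congr rfl fun i _ => hterm i]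
  rw [Finset.sum_sub_distrib]
  have htr : ∑ i, K i i = ∑ k, lam k := by
    rw [Finset.sum_congr rfl fun i _ => hspec i, Finset.sum_comm]
    refine Finset.sum_congr rfl fun k _ => ?_
    rw [← Finset.mul_sum, horth k k]
    simp
  have hS2 : ∑ i, ∑ k ∈ S, lam k * (v k i * v k i) = ∑ k ∈ S, lam k := by
    rw [Finset.sum_comm]
    refine Finset.sum_congr rfl fun k _ => ?_
    rw [← Finset.mul_sum, horth k k]
    simp
  rw [htr, hS2]
  have hsplit := Finset.sum_filter_add_sum_filter_not Finset.univ
    (fun k : Fin n => (k : ℕ) < r) lam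
  have : Finset.univ.filter (fun k : Fin n => ¬ (k : ℕ) < r)
      = Finset.univ.filter (fun k : Fin n => r ≤ (k : ℕ)) := by
    apply Finset.filter_congr; intro k _; simp [not_lt]
  rw [this] at hsplit
  linarith [hsplit]
end
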